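/- Let A be an n×n complex matrix of index k and let m ≥ 1 be an integer. Then the column space of A^{#_m} equals the column space of A^k, i.e., R(A^{#_m}) = R(A^k). -/

import Mathlib

/-!
The core-EP condition `XAX = X`, `R(X) = R(A^k)` makes `XA` act as the identity on `R(A^k)`, so
`X^i A^(i+t) = A^t` for `t ≥ k`, and it forces `rank(A^(k+1)) = rank(A^k)` (because `X = X(AX)`
and `R(AX) = R(A^(k+1))`), so the ranges `R(A^j)`, `j ≥ k`, all coincide. Since
`A^m A^† A^m = A^m`, the matrix `M = X^(m+1) A^m A^m A^†` satisfies `M A^(m+k+1) = A^(m+k)`,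
whence `R(A^k) = R(A^(m+k)) ⊆ R(M) ⊆ R(X) = R(A^k)`.
-/

open Matrix

/-- `X` is the Moore–Penrose inverse of `A` (four Penrose equations). -/
def MoorePenroseOf {n : ℕ} (A X : Matrix (Fin n) (Fin n) ℂ) : Prop :=
  A * X * A = A ∧ X * A * X = X ∧ (A * X)ᴴ = A * X ∧ (X * A)ᴴ = X * A

/-- Column space of a square complex matrix. -/
noncomputable def colSpace {n : ℕ} (A : Matrix (Fin n) (Fin n) ℂ) : Submodule ℂ (Fin n → ℂ) :=
  LinearMap.range A.mulVecLin

/-- Null space of a square complex matrix. -/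
noncomputable def nullSpace {n : ℕ} (A : Matrix (Fin n) (Fin n) ℂ) : Submodule ℂ (Fin n → ℂ) :=
  LinearMap.ker A.mulVecLin

/-- `k` is the index of `A`: the smallest nonnegative integer with
`rank(A^k) = rank(A^(k+1))`. -/
def HasIndex {n : ℕ} (A : Matrix (Fin n) (Fin n) ℂ) (k : ℕ) : Prop :=
  (A ^ k).rank = (A ^ (k + 1)).rank ∧ ∀ j < k, (A ^ j).rank ≠ (A ^ (j + 1)).rank

/-- `X` is the core-EP inverse of `A` (where `k = Ind(A)`): `XAX = X` and
`R(X) = R(Xᴴ) = R(A^k)`. -/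
def IsCoreEP {n : ℕ} (A X : Matrix (Fin n) (Fin n) ℂ) (k : ℕ) : Prop :=
  X * A * X = X ∧ colSpace X = colSpace (A ^ k) ∧ colSpace Xᴴ = colSpace (A ^ k)

open Module

section

variable {n : ℕ}

lemma colSpace_mul_le (B C : Matrix (Fin n) (Fin n) ℂ) : colSpace (B * C) ≤ colSpace B := by
  rw [colSpace, colSpace, mulVecLin_mul]
  exact LinearMap.range_comp_le_range _ _

lemma colSpace_mul (B C : Matrix (Fin n) (Fin n) ℂ) :
    colSpace (B * C) = (colSpace C).map B.mulVecLin := by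
  rw [colSpace, colSpace, mulVecLin_mul, LinearMap.range_comp]

lemma colSpace_pow_le_of_le (A : Matrix (Fin n) (Fin n) ℂ) {i j : ℕ} (hij : i ≤ j) :
    colSpace (A ^ j) ≤ colSpace (A ^ i) := by
  rw [← Nat.add_sub_cancel' hij, pow_add]
  exact colSpace_mul_le _ _

lemma colSpace_pow_eq_of_succ_eq {A : Matrix (Fin n) (Fin n) ℂ} {k : ℕ}
    (hk : colSpace (A ^ (k + 1)) = colSpace (A ^ k)) {j : ℕ} (hj : k ≤ j) :
    colSpace (A ^ j) = colSpace (A ^ k) := by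
  induction j, hj using Nat.le_induction with
  | base => rfl
  | succ j _ ih => rw [pow_succ', colSpace_mul, ih, ← colSpace_mul, ← pow_succ', hk]

lemma mul_mul_eq_of_colSpace_le {X A B : Matrix (Fin n) (Fin n) ℂ} (hX : X * A * X = X)
    (hB : colSpace B ≤ colSpace X) : X * A * B = B := by
  rw [ext_iff_mulVec]
  intro v
  obtain ⟨u, hu⟩ := hB ⟨v, rfl⟩
  change X *ᵥ u = B *ᵥ v at hu
  rw [← mulVec_mulVec, ← hu, mulVec_mulVec, hX]

section CoreEP

variable {X A : Matrix (Fin n) (Fin n) ℂ} {k : ℕ}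

lemma pow_mul_pow_add_eq (hX : X * A * X = X) (hR : colSpace X = colSpace (A ^ k))
    (i : ℕ) {t : ℕ} (ht : k ≤ t) : X ^ i * A ^ (i + t) = A ^ t := by
  induction i with
  | zero => simp
  | succ i ih =>
    have hXA : X * A * A ^ (i + t) = A ^ (i + t) :=
      mul_mul_eq_of_colSpace_le hX (hR ▸ colSpace_pow_le_of_le A (ht.trans (Nat.le_add_left t i)))
    calc X ^ (i + 1) * A ^ (i + 1 + t) = X ^ i * (X * A * A ^ (i + t)) := by
          rw [add_right_comm, pow_succ, pow_succ']
          simp only [mul_assoc]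
      _ = A ^ t := by rw [hXA, ih]

lemma colSpace_pow_succ_eq (hX : X * A * X = X) (hR : colSpace X = colSpace (A ^ k)) :
    colSpace (A ^ (k + 1)) = colSpace (A ^ k) := by
  have hAX : colSpace (A * X) = colSpace (A ^ (k + 1)) := by
    rw [colSpace_mul, hR, ← colSpace_mul, ← pow_succ']
  refine Submodule.eq_of_le_of_finrank_le (colSpace_pow_le_of_le A k.le_succ) ?_
  calc finrank ℂ (colSpace (A ^ k)) = finrank ℂ (colSpace (X * (A * X))) := by
        rw [← mul_assoc, hX, hR]
    _ ≤ finrank ℂ (colSpace (A * X)) := by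
        rw [colSpace_mul]
        exact Submodule.finrank_map_le _ _
    _ = finrank ℂ (colSpace (A ^ (k + 1))) := by rw [hAX]

end CoreEP

end

theorem stmt_10_general {n k m : ℕ}
    (A CEP AmDag : Matrix (Fin n) (Fin n) ℂ)
    (hCEP : IsCoreEP A CEP k)
    (hMP : MoorePenroseOf (A ^ m) AmDag) :
    colSpace (CEP ^ (m + 1) * A ^ m * (A ^ m * AmDag)) = colSpace (A ^ k) := by
  obtain ⟨hX, hR, -⟩ := hCEP
  have hkey : CEP ^ (m + 1) * A ^ m * (A ^ m * AmDag) * A ^ (m + k + 1) = A ^ (m + k) := by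
    calc _ = CEP ^ (m + 1) * A ^ m * (A ^ m * AmDag * A ^ m) * A ^ (k + 1) := by
          rw [add_assoc, pow_add A m]
          simp only [mul_assoc]
      _ = CEP ^ (m + 1) * A ^ ((m + 1) + (m + k)) := by
          rw [hMP.1, show (m + 1) + (m + k) = m + (m + (k + 1)) by ring]
          simp only [pow_add, mul_assoc]
      _ = A ^ (m + k) := pow_mul_pow_add_eq hX hR _ (Nat.le_add_left k m)
  apply le_antisymm
  · calc _ ≤ colSpace (CEP * CEP ^ m) := by
          rw [← pow_succ']; exact (colSpace_mul_le _ _).trans (colSpace_mul_le _ _)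
      _ ≤ colSpace (A ^ k) := hR ▸ colSpace_mul_le _ _
  · calc colSpace (A ^ k) = colSpace (A ^ (m + k)) :=
          (colSpace_pow_eq_of_succ_eq (colSpace_pow_succ_eq hX hR) (Nat.le_add_left k m)).symm
      _ ≤ _ := hkey ▸ colSpace_mul_le _ _

/-- `R(A^{#_m}) = R(A^k)`. -/
theorem stmt_10 {n k m : ℕ} (hm : 1 ≤ m)
    (A CEP AmDag : Matrix (Fin n) (Fin n) ℂ)
    (hInd : HasIndex A k)
    (hCEP : IsCoreEP A CEP k)
    (hMP : MoorePenroseOf (A ^ m) AmDag) :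
    colSpace (CEP ^ (m + 1) * A ^ m * (A ^ m * AmDag)) = colSpace (A ^ k) :=
  stmt_10_general A CEP AmDag hCEP hMP
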